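/- For every n ≥ 1 (with M_n, M_{n+1} invertible), writing ξ_{n,n} = I, the following moment-bilinear identities hold: Σ_{i,j=0}^{n} ξ_{n,i} m_{i+1,j} ξ_{n,j}^T = (ξ_{n,n−1} − ξ_{n+1,n}) H_n, i.e. ⟨x P_n(x), P_n^T(y)⟩ = (ξ_{n,n−1} − ξ_{n+1,n}) H_n, and Σ_{i,j=0}^{n} ξ_{n,i} m_{i,j+1} ξ_{n,j}^T = H_n (ξ_{n,n−1} − ξ_{n+1,n})^T, i.e. ⟨P_n(x), y P_n^T(y)⟩ = H_n (ξ_{n,n−1}^T − ξ_{n+1,n}^T). -/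
import Mathlib


open Matrix

noncomputable section

/-- `M_p`: real `p × p` matrices. -/
abbrev Mp (p : ℕ) := Matrix (Fin p) (Fin p) ℝ

/-- The block moment matrix `M_n = (m_{i,j})_{0 ≤ i,j ≤ n−1}`, an `np × np` real matrix. -/
def blockM {p : ℕ} (m : ℕ → ℕ → Mp p) (n : ℕ) : Matrix (Fin n × Fin p) (Fin n × Fin p) ℝ :=
  Matrix.of fun a b => m a.1 b.1 a.2 b.2

/-- The row of moments `(m_{n,0}, …, m_{n,n−1})`, a `p × np` matrix. -/
def rowm {p : ℕ} (m : ℕ → ℕ → Mp p) (n : ℕ) : Matrix (Fin p) (Fin n × Fin p) ℝ :=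
  Matrix.of fun a b => m n b.1 a b.2

/-- `ξ_{n,i}`, defined by `(ξ_{n,0},…,ξ_{n,n−1}) = −(m_{n,0},…,m_{n,n−1}) M_n⁻¹`. -/
def xiD {p : ℕ} (m : ℕ → ℕ → Mp p) (n : ℕ) (i : Fin n) : Mp p :=
  Matrix.of fun a b => ((-(rowm m n)) * (blockM m n)⁻¹) a (i, b)

/-- `ξ_{n,i}` extended by the convention `ξ_{n,n} = I`. -/
def xie {p : ℕ} (m : ℕ → ℕ → Mp p) (n i : ℕ) : Mp p :=
  if h : i < n then xiD m n ⟨i, h⟩ else 1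

/-- `H_n = m_{n,n} + Σ_{i=0}^{n−1} ξ_{n,i} m_{i,n}`. -/
def HmatD {p : ℕ} (m : ℕ → ℕ → Mp p) (n : ℕ) : Mp p :=
  m n n + ∑ i : Fin n, xiD m n i * m i n

section Aux

variable {p : ℕ} (m : ℕ → ℕ → Mp p)

lemma sum_xiD (hM : ∀ k, IsUnit (blockM m k)) (n : ℕ) (j : Fin n) :
    ∑ i : Fin n, xiD m n i * m i j = - m n j := by
  have hd : IsUnit (blockM m n).det := (Matrix.isUnit_iff_isUnit_det _).mp (hM n)
  have h1 : (-(rowm m n)) * (blockM m n)⁻¹ * blockM m n = -(rowm m n) := by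
    rw [Matrix.mul_assoc, Matrix.nonsing_inv_mul _ hd, Matrix.mul_one]
  ext a b
  have h2 := congrFun (congrFun h1 a) (j, b)
  simp only [Matrix.mul_apply, Fintype.sum_prod_type, blockM, rowm, xiD, Matrix.of_apply,
    Matrix.neg_apply, Matrix.sum_apply, neg_mul, Finset.sum_neg_distrib, neg_inj] at h2 ⊢
  convert h2 using 2

lemma xie_of_lt {n i : ℕ} (h : i < n) : xie m n i = xiD m n ⟨i, h⟩ := dif_pos h

lemma xie_self (n : ℕ) : xie m n n = 1 := dif_neg (lt_irrefl n)

lemma sum_xie_lt (hM : ∀ k, IsUnit (blockM m k)) {n j : ℕ} (hj : j < n) :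
    ∑ i ∈ Finset.range n, xie m n i * m i j = - m n j := by
  rw [Finset.sum_range (fun i => xie m n i * m i j)]
  have : ∀ i : Fin n, xie m n (i : ℕ) * m i j = xiD m n i * m i (⟨j, hj⟩ : Fin n) := by
    intro i; rw [xie_of_lt m i.isLt]
  rw [Finset.sum_congr rfl (fun i _ => this i), sum_xiD m hM n ⟨j, hj⟩]

lemma sum_xie_lt' (hM : ∀ k, IsUnit (blockM m k)) {n j : ℕ} (hj : j < n) :
    ∑ i ∈ Finset.range (n + 1), xie m n i * m i j = 0 := by
  rw [Finset.sum_range_succ, sum_xie_lt m hM hj, xie_self, one_mul, neg_add_cancel]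

lemma sum_xie_eq (n : ℕ) :
    ∑ i ∈ Finset.range (n + 1), xie m n i * m i n = HmatD m n := by
  rw [Finset.sum_range_succ, xie_self, one_mul, HmatD, add_comm]
  congr 1
  rw [Finset.sum_range (fun i => xie m n i * m i n)]
  exact Finset.sum_congr rfl (fun i _ => by rw [xie_of_lt m i.isLt])

lemma sum_xie_ite (hsym : ∀ i j, m i j = (m j i)ᵀ) (hM : ∀ k, IsUnit (blockM m k))
    {n j : ℕ} (hj : j < n + 1) :
    ∑ i ∈ Finset.range (n + 1), xie m n i * m i j
      = if j = n then HmatD m n else 0 := by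
  by_cases h : j = n
  · subst h; rw [sum_xie_eq, if_pos rfl]
  · rw [sum_xie_lt' m hM (by omega), if_neg h]

lemma Hsym (hsym : ∀ i j, m i j = (m j i)ᵀ) (hM : ∀ k, IsUnit (blockM m k)) (n : ℕ) :
    (HmatD m n)ᵀ = HmatD m n := by
  have hmt : ∀ i j, (m i j)ᵀ = m j i := fun i j => by
    rw [hsym i j, Matrix.transpose_transpose]
  have hS : ∑ j ∈ Finset.range (n + 1), ∑ i ∈ Finset.range (n + 1),
      xie m n i * m i j * (xie m n j)ᵀ = HmatD m n := by
    have h1 : ∀ j ∈ Finset.range (n + 1),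
        ∑ i ∈ Finset.range (n + 1), xie m n i * m i j * (xie m n j)ᵀ
          = if j = n then HmatD m n * (xie m n j)ᵀ else 0 := by
      intro j hj
      simp only [Finset.mem_range] at hj
      rw [← Finset.sum_mul, sum_xie_ite m hsym hM hj]
      by_cases h : j = n
      · rw [if_pos h, if_pos h]
      · rw [if_neg h, if_neg h, zero_mul]
    rw [Finset.sum_congr rfl h1]
    simp [xie_self]
  conv_lhs => rw [← hS]
  conv_rhs => rw [← hS]
  simp only [Matrix.transpose_sum, Matrix.transpose_mul, Matrix.transpose_transpose, hmt,
    Matrix.mul_assoc]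
  rw [Finset.sum_comm]

lemma sum_m_xieT (hsym : ∀ i j, m i j = (m j i)ᵀ) (hM : ∀ k, IsUnit (blockM m k))
    {n k : ℕ} (hk : k < n + 1) :
    ∑ j ∈ Finset.range (n + 1), m k j * (xie m n j)ᵀ
      = if k = n then HmatD m n else 0 := by
  have hmt : ∀ i j, (m i j)ᵀ = m j i := fun i j => by
    rw [hsym i j, Matrix.transpose_transpose]
  have h1 : ∀ j ∈ Finset.range (n + 1),
      m k j * (xie m n j)ᵀ = (xie m n j * m j k)ᵀ := by
    intro j _; rw [Matrix.transpose_mul, hmt]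
  rw [Finset.sum_congr rfl h1, ← Matrix.transpose_sum, sum_xie_ite m hsym hM hk]
  by_cases h : k = n
  · simp only [if_pos h]; exact Hsym m hsym hM n
  · simp only [if_neg h, Matrix.transpose_zero]

lemma sum_U (hsym : ∀ i j, m i j = (m j i)ᵀ) (hM : ∀ k, IsUnit (blockM m k)) (n : ℕ) :
    ∑ j ∈ Finset.range (n + 1), xie m n j * m j (n + 1)
      = -(HmatD m n * (xiD m (n + 1) ⟨n, by omega⟩)ᵀ) := by
  have hmt : ∀ i j, (m i j)ᵀ = m j i := fun i j => by
    rw [hsym i j, Matrix.transpose_transpose]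
  have hrec : ∀ j < n + 1, m j (n + 1)
      = -∑ i ∈ Finset.range (n + 1), m j i * (xie m (n + 1) i)ᵀ := by
    intro j hj
    have h := sum_xie_lt m hM (n := n + 1) (j := j) hj
    have h2 := congrArg Matrix.transpose h
    rw [Matrix.transpose_sum, Matrix.transpose_neg, hmt] at h2
    have h3 : ∀ i ∈ Finset.range (n + 1),
        (xie m (n + 1) i * m i j)ᵀ = m j i * (xie m (n + 1) i)ᵀ := by
      intro i _; rw [Matrix.transpose_mul, hmt]
    rw [Finset.sum_congr rfl h3] at h2
    rw [h2, neg_neg]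
  have step1 : ∀ j ∈ Finset.range (n + 1), xie m n j * m j (n + 1)
      = -∑ i ∈ Finset.range (n + 1), (xie m n j * m j i) * (xie m (n + 1) i)ᵀ := by
    intro j hj
    simp only [Finset.mem_range] at hj
    rw [hrec j hj, mul_neg, Finset.mul_sum]
    simp only [Matrix.mul_assoc]
  rw [Finset.sum_congr rfl step1, Finset.sum_neg_distrib, neg_inj, Finset.sum_comm]
  have step2 : ∀ i ∈ Finset.range (n + 1),
      ∑ j ∈ Finset.range (n + 1), (xie m n j * m j i) * (xie m (n + 1) i)ᵀ
        = if i = n then HmatD m n * (xie m (n + 1) i)ᵀ else 0 := by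
    intro i hi
    simp only [Finset.mem_range] at hi
    rw [← Finset.sum_mul, sum_xie_ite m hsym hM hi]
    by_cases h : i = n
    · rw [if_pos h, if_pos h]
    · rw [if_neg h, if_neg h, zero_mul]
  rw [Finset.sum_congr rfl step2]
  simp [xie_of_lt m (by omega : n < n + 1)]

lemma mainA (hsym : ∀ i j, m i j = (m j i)ᵀ) (hM : ∀ k, IsUnit (blockM m k))
    (n : ℕ) (hn : 1 ≤ n) :
    ∑ i ∈ Finset.range (n + 1), ∑ j ∈ Finset.range (n + 1),
        xie m n i * m (i + 1) j * (xie m n j)ᵀ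
      = (xiD m n ⟨n - 1, by omega⟩ - xiD m (n + 1) ⟨n, by omega⟩) * HmatD m n := by
  have hmt : ∀ i j, (m i j)ᵀ = m j i := fun i j => by
    rw [hsym i j, Matrix.transpose_transpose]
  have hterm : ∀ i ∈ Finset.range (n + 1),
      ∑ j ∈ Finset.range (n + 1), xie m n i * m (i + 1) j * (xie m n j)ᵀ
        = xie m n i * ∑ j ∈ Finset.range (n + 1), m (i + 1) j * (xie m n j)ᵀ := by
    intro i _
    rw [Finset.mul_sum]
    exact Finset.sum_congr rfl fun j _ => mul_assoc _ _ _
  rw [Finset.sum_congr rfl hterm, Finset.sum_range_succ, xie_self, one_mul]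
  have hlast : ∑ j ∈ Finset.range (n + 1), m (n + 1) j * (xie m n j)ᵀ
      = -(xiD m (n + 1) ⟨n, by omega⟩ * HmatD m n) := by
    have h1 : ∀ j ∈ Finset.range (n + 1),
        m (n + 1) j * (xie m n j)ᵀ = (xie m n j * m j (n + 1))ᵀ := by
      intro j _; rw [Matrix.transpose_mul, hmt]
    rw [Finset.sum_congr rfl h1, ← Matrix.transpose_sum, sum_U m hsym hM n,
      Matrix.transpose_neg, Matrix.transpose_mul, Matrix.transpose_transpose,
      Hsym m hsym hM n]
  have hz : ∀ i ∈ Finset.range n, i ≠ n - 1 →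
      xie m n i * ∑ j ∈ Finset.range (n + 1), m (i + 1) j * (xie m n j)ᵀ = 0 := by
    intro i hi hne
    simp only [Finset.mem_range] at hi
    rw [sum_m_xieT m hsym hM (by omega : i + 1 < n + 1), if_neg (by omega), mul_zero]
  rw [Finset.sum_eq_single_of_mem (n - 1) (Finset.mem_range.2 (by omega)) hz,
    sum_m_xieT m hsym hM (by omega : n - 1 + 1 < n + 1), if_pos (by omega : n - 1 + 1 = n),
    xie_of_lt m (by omega : n - 1 < n), hlast, sub_mul, ← sub_eq_add_neg]

end Aux

/-- **Moment-bilinear identities.**  With symmetric moments `m_{i,j} = m_{j,i}ᵀ` obeying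
`m_{i+1,j} + m_{i,j+1} = φ_i φ_j`, every block moment matrix invertible, `n ≥ 1`, and
the convention `ξ_{n,n} = I`:
`⟨x P_n(x), P_nᵀ(y)⟩ = Σ_{i,j=0}^n ξ_{n,i} m_{i+1,j} ξ_{n,j}ᵀ = (ξ_{n,n−1} − ξ_{n+1,n}) H_n` and
`⟨P_n(x), y P_nᵀ(y)⟩ = Σ_{i,j=0}^n ξ_{n,i} m_{i,j+1} ξ_{n,j}ᵀ = H_n (ξ_{n,n−1} − ξ_{n+1,n})ᵀ`. -/
theorem stmt9 {p : ℕ} (hp : 1 ≤ p) (m : ℕ → ℕ → Mp p) (φ : ℕ → Mp p)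
    (hsym : ∀ i j, m i j = (m j i)ᵀ)
    (hphi : ∀ i j, m (i + 1) j + m i (j + 1) = φ i * φ j)
    (hM : ∀ k, IsUnit (blockM m k))
    (n : ℕ) (hn : 1 ≤ n) :
    (∑ i ∈ Finset.range (n + 1), ∑ j ∈ Finset.range (n + 1),
        xie m n i * m (i + 1) j * (xie m n j)ᵀ)
      = (xiD m n ⟨n - 1, by omega⟩ - xiD m (n + 1) ⟨n, by omega⟩) * HmatD m n ∧
    (∑ i ∈ Finset.range (n + 1), ∑ j ∈ Finset.range (n + 1),
        xie m n i * m i (j + 1) * (xie m n j)ᵀ)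
      = HmatD m n * ((xiD m n ⟨n - 1, by omega⟩)ᵀ - (xiD m (n + 1) ⟨n, by omega⟩)ᵀ) := by
  have hmt : ∀ i j, (m i j)ᵀ = m j i := fun i j => by
    rw [hsym i j, Matrix.transpose_transpose]
  have hA := mainA m hsym hM n hn
  refine ⟨hA, ?_⟩
  have hBA : (∑ i ∈ Finset.range (n + 1), ∑ j ∈ Finset.range (n + 1),
      xie m n i * m i (j + 1) * (xie m n j)ᵀ)
      = (∑ i ∈ Finset.range (n + 1), ∑ j ∈ Finset.range (n + 1),
      xie m n i * m (i + 1) j * (xie m n j)ᵀ)ᵀ := by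
    simp only [Matrix.transpose_sum, Matrix.transpose_mul, Matrix.transpose_transpose, hmt]
    rw [Finset.sum_comm]
    simp only [Matrix.mul_assoc]
  rw [hBA, hA, Matrix.transpose_mul, Matrix.transpose_sub, Hsym m hsym hM n]
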